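/- Assume μ > −1 and μλ + μ + λ ≥ 0, and assume either μλ − μ − λ < 0, or (μλ − μ − λ = 0 and μ > 1). Then H_{μλ} has no even eigenvalue in (−∞, 0), and it has exactly one even eigenvalue outside [0,2], which lies in (2, +∞). -/

import Mathlib

/-!
For `z ∉ [0, 2]` write `r + r⁻¹ = 2 (1 - z)` with `|r| < 1`. Beyond the support of the potential
an even `ℓ²` eigenfunction must decay geometrically, `ψ (n + 2) = r ψ (n + 1)`, and then the
equations at `x = 0, 1` have a nonzero solution exactly when the cubic
`J(r) = (1 + λ r)(r² + 2 μ r + 1) - 2 r²` vanishes. Eigenvalues `z < 0` correspond to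
`r ∈ (0, 1)`, where `J > 0`; eigenvalues `z > 2` to `r ∈ (-1, 0)`, where
`J(-1) = 2 (μλ - μ - λ) ≤ 0 < 1 = J(0)` gives a root and Vieta's formulas rule out a second one.
-/

open MeasureTheory Real Filter Topology

/-- The potential `v(0) = μ`, `v(±1) = λ/2`, `v(x) = 0` for `|x| > 1`. -/
noncomputable def pot (μ lam : ℝ) (x : ℤ) : ℝ :=
  if x = 0 then μ else if x = 1 ∨ x = -1 then lam / 2 else 0

/-- A real number `z` is an *even eigenvalue* of the discrete Schrödinger operator
`H_{μλ}` on `ℓ²(ℤ; ℂ)`, `(H_{μλ}ψ)(x) = ψ(x) − (ψ(x+1) + ψ(x−1))/2 + v(x)ψ(x)`,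
if there is a nonzero even `ψ ∈ ℓ²(ℤ; ℂ)` with `H_{μλ}ψ = zψ`. -/
def IsEvenEigenvalue (μ lam z : ℝ) : Prop :=
  ∃ ψ : lp (fun _ : ℤ => ℂ) 2, ψ ≠ 0 ∧ (∀ x : ℤ, ψ (-x) = ψ x) ∧
    ∀ x : ℤ, ψ x - (ψ (x + 1) + ψ (x - 1)) / 2 + (pot μ lam x : ℂ) * ψ x = (z : ℂ) * ψ x

open scoped ENNReal

theorem Memℓp.tendsto_norm_cofinite_zero {α : Type*} {E : α → Type*}
    [∀ i, NormedAddCommGroup (E i)] {p : ℝ≥0∞} (hp : 0 < p.toReal) {f : ∀ i, E i}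
    (hf : Memℓp f p) : Tendsto (fun i => ‖f i‖) cofinite (𝓝 0) := by
  have hpow := ((memℓp_gen_iff hp).1 hf).tendsto_cofinite_zero
  have hroot := (Real.continuousAt_rpow_const 0 p.toReal⁻¹ (Or.inr (inv_nonneg.2 hp.le))).tendsto
  rw [Real.zero_rpow (inv_ne_zero hp.ne')] at hroot
  refine (hroot.comp hpow).congr fun i => ?_
  exact Real.rpow_rpow_inv (norm_nonneg _) hp.ne'

theorem memℓp_pow_natAbs {𝕜 : Type*} [NormedField 𝕜] {r : 𝕜} (hr : ‖r‖ < 1) {p : ℝ≥0∞}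
    (hp : 0 < p.toReal) : Memℓp (fun x : ℤ => r ^ x.natAbs) p := by
  apply memℓp_gen
  have hgeom : Summable fun n : ℕ => (‖r‖ ^ p.toReal) ^ n :=
    summable_geometric_of_lt_one (by positivity) (Real.rpow_lt_one (norm_nonneg _) hr hp)
  have hterm : ∀ x : ℤ, ‖r ^ x.natAbs‖ ^ p.toReal = (‖r‖ ^ p.toReal) ^ x.natAbs := fun x => by
    rw [norm_pow, Real.rpow_pow_comm (norm_nonneg _)]
  simp only [hterm]
  exact Summable.of_nat_of_neg (by simpa using hgeom) (by simpa using hgeom)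

theorem eq_mul_of_tendsto_zero_of_recurrence {𝕜 : Type*} [NormedField 𝕜] {u : ℕ → 𝕜} {r : 𝕜}
    (hr : ‖r‖ ≤ 1) (hu : Tendsto u atTop (𝓝 0))
    (hrec : ∀ n, r * (u (n + 2) + u n) = (r ^ 2 + 1) * u (n + 1)) (n : ℕ) :
    u (n + 1) = r * u n := by
  set c : ℕ → 𝕜 := fun n => u (n + 1) - r * u n with hc
  have hstep : ∀ n, c n = r * c (n + 1) := fun n => by
    simp only [hc]
    linear_combination -(hrec n)
  have hpow : ∀ k, c n = r ^ k * c (n + k) := by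
    intro k
    induction k with
    | zero => simp
    | succ k ih => rw [ih, hstep, ← add_assoc]; ring
  have hlim : Tendsto (fun k => ‖c (n + k)‖) atTop (𝓝 0) := by
    have := (hu.comp (tendsto_add_atTop_nat 1)).sub (hu.const_mul r)
    simp only [mul_zero, sub_zero] at this
    exact (tendsto_zero_iff_norm_tendsto_zero.1 this).comp (tendsto_add_atTop_nat n)
      |>.congr fun k => by simp [hc, add_comm n k]
  have hle : ‖c n‖ ≤ 0 := ge_of_tendsto' hlim fun k => by
    rw [hpow k, norm_mul, norm_pow]
    exact mul_le_of_le_one_left (norm_nonneg _) (pow_le_one₀ (norm_nonneg _) hr)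
  exact sub_eq_zero.1 (norm_le_zero_iff.1 hle)

/-- With `ψ (n + 1) = r ^ n ψ 1` and `r + r⁻¹ = 2 (1 - z)`, the equations at `x = 0, 1` read
`(1 + μ - z) ψ 0 = ψ 1` and `(1 + λ r) ψ 1 = r ψ 0`; `evenJost μ lam r` is `2 r` times the
determinant of this system. -/
def evenJost (μ lam r : ℝ) : ℝ := (1 + lam * r) * (r ^ 2 + 2 * μ * r + 1) - 2 * r ^ 2

section evenJost

variable {μ lam : ℝ}

theorem evenJost_pos (hμ : -1 < μ) (h : 0 ≤ μ * lam + μ + lam) {r : ℝ}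
    (hr : r ∈ Set.Ioo (0 : ℝ) 1) : 0 < evenJost μ lam r := by
  obtain ⟨hr0, hr1⟩ := hr
  have hM : 0 < 1 + μ := by linarith
  have hL : 0 < 1 + lam := by nlinarith
  have hu : 0 < 1 - r := by linarith
  unfold evenJost
  nlinarith [mul_pos (mul_pos hu hu) hu, mul_pos (mul_pos hM hr0) hu,
    mul_pos (mul_pos hL hr0) (mul_pos hu hu), mul_nonneg h (mul_pos hr0 hr0).le]

theorem evenJost_neg_one (μ lam : ℝ) : evenJost μ lam (-1) = 2 * (μ * lam - μ - lam) := by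
  unfold evenJost; ring

theorem exists_evenJost_eq_zero
    (h : μ * lam - μ - lam < 0 ∨ (μ * lam - μ - lam = 0 ∧ 1 < μ)) :
    ∃ r ∈ Set.Ioo (-1 : ℝ) 0, evenJost μ lam r = 0 := by
  rcases h with h | ⟨h, hμ⟩
  · have hcont : ContinuousOn (evenJost μ lam) (Set.Icc (-1) 0) := by
      unfold evenJost; fun_prop
    refine intermediate_value_Ioo (by norm_num) hcont ⟨?_, ?_⟩
    · rw [evenJost_neg_one]; linarith
    · norm_num [evenJost]
  · -- on the line `μλ - μ - λ = 0` the root `-1` splits off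
    set q : ℝ → ℝ := fun r => lam * r ^ 2 + (2 * μ + lam - 1) * r + 1 with hq
    have hcont : ContinuousOn q (Set.Icc (-1) 0) := by fun_prop
    obtain ⟨r, hr, hqr⟩ := intermediate_value_Ioo (by norm_num) hcont
      (show (0 : ℝ) ∈ Set.Ioo (q (-1)) (q 0) by constructor <;> simp only [hq] <;> nlinarith)
    refine ⟨r, hr, ?_⟩
    simp only [hq] at hqr
    unfold evenJost
    linear_combination (r + 1) * hqr + 2 * r ^ 2 * h

theorem lam_ne_zero_of_evenJost_eq_zero {r₁ r₂ : ℝ} (hne : r₁ ≠ r₂) (hp : 0 < r₁ * r₂)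
    (h₁ : evenJost μ lam r₁ = 0) (h₂ : evenJost μ lam r₂ = 0) : lam ≠ 0 := by
  rintro rfl
  unfold evenJost at h₁ h₂
  have hsum : r₁ + r₂ = 2 * μ := by
    have := (mul_eq_zero.1 (show (r₁ - r₂) * (r₁ + r₂ - 2 * μ) = 0 by
      linear_combination h₂ - h₁)).resolve_left (sub_ne_zero.2 hne)
    linarith
  linarith [show r₁ * r₂ + 1 = 0 by linear_combination h₁ + r₁ * hsum]

theorem exists_third_root_evenJost (hlam : lam ≠ 0) {r₁ r₂ : ℝ} (hne : r₁ ≠ r₂)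
    (hr₁ : r₁ ≠ 0) (hr₂ : r₂ ≠ 0) (h₁ : evenJost μ lam r₁ = 0) (h₂ : evenJost μ lam r₂ = 0) :
    ∃ r₃, lam * (r₁ + r₂ + r₃) = 1 - 2 * μ * lam ∧
      lam * (r₁ * r₂ + r₁ * r₃ + r₂ * r₃) = 2 * μ + lam ∧ lam * (r₁ * r₂ * r₃) = -1 := by
  unfold evenJost at h₁ h₂
  have hsum :
      lam * (r₁ ^ 2 + r₁ * r₂ + r₂ ^ 2) + (2 * μ * lam - 1) * (r₁ + r₂) + (2 * μ + lam) = 0 := by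
    refine (mul_eq_zero.1 ?_).resolve_left (sub_ne_zero.2 hne)
    linear_combination h₁ - h₂
  have hpair : lam * (r₁ * r₂) * (r₁ + r₂) + (2 * μ * lam - 1) * (r₁ * r₂) = 1 := by
    linear_combination ((r₁ + r₂) / 2) * hsum - h₁ / 2 - h₂ / 2
  refine ⟨-1 / (lam * (r₁ * r₂)), ?_, ?_, ?_⟩ <;> field_simp
  · linear_combination hpair
  · linear_combination (r₁ + r₂) * hpair - r₁ * r₂ * hsum

theorem evenJost_root_unique (hw : μ * lam - μ - lam ≤ 0) {r₁ r₂ : ℝ}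
    (hr₁ : r₁ ∈ Set.Ioo (-1 : ℝ) 0) (hr₂ : r₂ ∈ Set.Ioo (-1 : ℝ) 0)
    (h₁ : evenJost μ lam r₁ = 0) (h₂ : evenJost μ lam r₂ = 0) : r₁ = r₂ := by
  obtain ⟨hr₁l, hr₁u⟩ := hr₁
  obtain ⟨hr₂l, hr₂u⟩ := hr₂
  by_contra hne
  have hp : 0 < r₁ * r₂ := mul_pos_of_neg_of_neg hr₁u hr₂u
  have hlam := lam_ne_zero_of_evenJost_eq_zero hne hp h₁ h₂
  obtain ⟨r₃, hV₁, hV₂, hV₃⟩ := exists_third_root_evenJost hlam hne hr₁u.ne hr₂u.ne h₁ h₂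
  -- from Vieta: `(1 - r₁r₂)(1 - r₂r₃)(1 - r₃r₁) = -2 (r₁r₂r₃)²`, so some `rᵢrⱼ` exceeds `1`
  have hprod : lam ^ 2 * ((1 - r₁ * r₂) * (1 - r₂ * r₃) * (1 - r₃ * r₁) + 2 * (r₁ * r₂ * r₃) ^ 2)
      = 0 := by
    linear_combination (lam * (r₁ * r₂ * r₃)) * hV₁ - lam * hV₂ +
      (lam * (r₁ * r₂ * r₃) - 2 * μ * lam) * hV₃
  have hsmall : r₂ * r₃ < 1 ∧ r₃ * r₁ < 1 := by
    rcases hlam.lt_or_gt with hneg | hpos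
    · have hr₃ : 0 < r₃ := by
        by_contra! h
        nlinarith [mul_nonneg (neg_nonneg.2 hneg.le) (mul_nonneg hp.le (neg_nonneg.2 h))]
      constructor <;> nlinarith
    · have hr₃ : r₃ < 0 := by
        by_contra! h
        nlinarith [mul_nonneg hpos.le (mul_nonneg hp.le h)]
      have hr₃l : -1 ≤ r₃ := by
        have hG : 2 * (μ * lam - μ - lam) = -(lam * ((1 + r₁) * (1 + r₂)) * (1 + r₃)) := by
          linear_combination hV₁ + hV₂ + hV₃
        by_contra! h
        have : 0 < lam * ((1 + r₁) * (1 + r₂)) := by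
          apply mul_pos hpos; apply mul_pos <;> linarith
        nlinarith
      constructor <;> nlinarith
  have h₁₂ : r₁ * r₂ < 1 := by nlinarith
  have : 0 < (1 - r₁ * r₂) * (1 - r₂ * r₃) * (1 - r₃ * r₁) := by
    apply mul_pos; apply mul_pos
    all_goals linarith [hsmall.1, hsmall.2]
  have hl2 : 0 < lam ^ 2 := by positivity
  nlinarith [mul_pos hl2 this, mul_nonneg hl2.le (sq_nonneg (r₁ * r₂ * r₃))]

end evenJost

theorem pot_neg (μ lam : ℝ) (x : ℤ) : pot μ lam (-x) = pot μ lam x := by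
  unfold pot
  split_ifs <;> first | rfl | omega

theorem pot_of_two_le (μ lam : ℝ) {x : ℤ} (hx : 2 ≤ x) : pot μ lam x = 0 := by
  unfold pot
  rw [if_neg (by omega), if_neg (by omega)]

def EigenEqAt (μ lam z : ℝ) (ψ : ℤ → ℂ) (x : ℤ) : Prop :=
  ψ x - (ψ (x + 1) + ψ (x - 1)) / 2 + (pot μ lam x : ℂ) * ψ x = (z : ℂ) * ψ x

theorem EigenEqAt.neg {μ lam z : ℝ} {ψ : ℤ → ℂ} (hψ : ∀ x, ψ (-x) = ψ x) {x : ℤ}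
    (h : EigenEqAt μ lam z ψ x) : EigenEqAt μ lam z ψ (-x) := by
  unfold EigenEqAt at h ⊢
  rw [pot_neg, hψ, show -x + 1 = -(x - 1) by ring, show -x - 1 = -(x + 1) by ring, hψ, hψ]
  linear_combination h

theorem eq_zero_of_even_of_natCast {M : Type*} [Zero M] {ψ : ℤ → M} (hψ : ∀ x, ψ (-x) = ψ x)
    (h : ∀ n : ℕ, ψ n = 0) (x : ℤ) : ψ x = 0 := by
  rcases Int.natAbs_eq x with hx | hx <;> rw [hx]
  · exact h _
  · rw [hψ, h]

theorem eigenfunction_tail {μ lam z r : ℝ} (hr : |r| < 1) (hz : r ^ 2 + 1 = 2 * (1 - z) * r)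
    (ψ : lp (fun _ : ℤ => ℂ) 2) (heq : ∀ n : ℕ, EigenEqAt μ lam z ψ (n + 2)) (n : ℕ) :
    ψ (n + 2) = r * ψ (n + 1) := by
  have hzC : (r : ℂ) ^ 2 + 1 = 2 * (1 - z) * r := by exact_mod_cast hz
  have hψ_congr : ∀ {a b : ℤ}, a = b → ψ a = ψ b := fun h => h ▸ rfl
  have hrec : ∀ n : ℕ, (r : ℂ) * (ψ (n + 3) + ψ (n + 1)) = (r ^ 2 + 1) * ψ (n + 2) := by
    intro n
    have hn := heq n
    unfold EigenEqAt at hn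
    rw [pot_of_two_le μ lam (by omega), show (n : ℤ) + 2 + 1 = n + 3 by ring,
      show (n : ℤ) + 2 - 1 = n + 1 by ring, Complex.ofReal_zero, zero_mul, add_zero] at hn
    linear_combination (-2 * r : ℂ) * hn - ψ (n + 2) * hzC
  have hlim : Tendsto (fun n : ℕ => ψ (n + 1)) atTop (𝓝 0) := by
    have := (lp.memℓp ψ).tendsto_norm_cofinite_zero (by norm_num)
    refine tendsto_zero_iff_norm_tendsto_zero.2 (this.comp ?_)
    rw [← Nat.cofinite_eq_atTop]
    exact Function.Injective.tendsto_cofinite fun m n h => by simpa using h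
  have hnorm : ‖(r : ℂ)‖ ≤ 1 := by rw [Complex.norm_real, Real.norm_eq_abs]; exact hr.le
  have key := eq_mul_of_tendsto_zero_of_recurrence (u := fun n : ℕ => ψ ((n : ℤ) + 1))
    hnorm hlim fun n => by
      simp only
      rw [hψ_congr (show ((n + 2 : ℕ) : ℤ) + 1 = n + 3 by push_cast; ring),
        hψ_congr (show ((n + 1 : ℕ) : ℤ) + 1 = n + 2 by push_cast; ring)]
      exact hrec n
  rw [← hψ_congr (show ((n + 1 : ℕ) : ℤ) + 1 = n + 2 by push_cast; ring)]
  exact key n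

theorem evenJost_eq_zero_of_isEvenEigenvalue {μ lam z r : ℝ} (hr : |r| < 1)
    (hz : r ^ 2 + 1 = 2 * (1 - z) * r) (h : IsEvenEigenvalue μ lam z) :
    evenJost μ lam r = 0 := by
  obtain ⟨ψ, hne, hψ, heq⟩ := h
  have htail := eigenfunction_tail hr hz ψ fun n => heq _
  have e₀ := heq 0
  rw [zero_add, zero_sub, hψ, show (pot μ lam 0 : ℂ) = μ by simp [pot]] at e₀
  have e₁ := heq 1
  rw [show (1 : ℤ) + 1 = 2 by norm_num, sub_self, show (pot μ lam 1 : ℂ) = lam / 2 by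
    norm_num [pot], show ψ 2 = r * ψ 1 by simpa using htail 0] at e₁
  have hψ₀ : ψ 0 ≠ 0 := by
    intro h₀
    have h₁ : ψ 1 = 0 := by linear_combination -e₀ + (1 + μ - z) * h₀
    have hsucc : ∀ n : ℕ, ψ (n + 1) = 0 := by
      intro n
      induction n with
      | zero => simpa using h₁
      | succ n ih => simpa [add_assoc, one_add_one_eq_two, ih] using htail n
    refine hne (lp.ext (funext (eq_zero_of_even_of_natCast hψ fun n => ?_)))
    rcases n with _ | n
    · exact h₀
    · simpa using hsucc n
  have hzC : (r : ℂ) ^ 2 + 1 = 2 * (1 - z) * r := by exact_mod_cast hz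
  have hJ : ((evenJost μ lam r : ℝ) : ℂ) * ψ 0 = 0 := by
    unfold evenJost
    push_cast
    linear_combination 2 * r * (1 + lam * r) * e₀ + 4 * r ^ 2 * e₁ +
      ((1 + lam * r) * ψ 0 + 2 * r * ψ 1) * hzC
  exact_mod_cast (mul_eq_zero.1 hJ).resolve_right hψ₀

def evenBoundState (lam r : ℝ) (x : ℤ) : ℂ :=
  if x = 0 then ((1 + lam * r : ℝ) : ℂ) else (r : ℂ) ^ x.natAbs

theorem evenBoundState_neg (lam r : ℝ) (x : ℤ) :
    evenBoundState lam r (-x) = evenBoundState lam r x := by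
  simp [evenBoundState]

theorem memℓp_evenBoundState (lam : ℝ) {r : ℝ} (hr : |r| < 1) :
    Memℓp (evenBoundState lam r) 2 := by
  have hsplit : evenBoundState lam r =
      (fun x : ℤ => (r : ℂ) ^ x.natAbs) + Pi.single 0 ((lam * r : ℝ) : ℂ) := by
    funext x
    by_cases hx : x = 0
    · simp [evenBoundState, hx, add_comm]
    · simp [evenBoundState, hx]
  rw [hsplit]
  exact (memℓp_pow_natAbs (by simpa using hr) (by norm_num)).add (lp.memℓp (lp.single 2 0 _))

theorem eigenEqAt_evenBoundState {μ lam z r : ℝ} (hr : r ≠ 0)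
    (hz : r ^ 2 + 1 = 2 * (1 - z) * r) (hJ : evenJost μ lam r = 0) (x : ℤ) :
    EigenEqAt μ lam z (evenBoundState lam r) x := by
  have hzC : (r : ℂ) ^ 2 + 1 = 2 * (1 - z) * r := by exact_mod_cast hz
  have hJC : ((evenJost μ lam r : ℝ) : ℂ) = 0 := by exact_mod_cast hJ
  have hnat : ∀ n : ℕ, EigenEqAt μ lam z (evenBoundState lam r) n := by
    intro n
    unfold EigenEqAt evenBoundState
    rcases n with _ | _ | n
    · simp only [Nat.cast_zero, zero_add, zero_sub, pot, if_true]
      norm_num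
      unfold evenJost at hJC
      push_cast at hJC
      apply mul_left_cancel₀ (show (2 * r : ℂ) ≠ 0 by simpa using hr)
      linear_combination hJC - (1 + lam * r) * hzC
    · norm_num [pot]
      linear_combination -hzC / 2
    · rw [pot_of_two_le μ lam (by omega)]
      rw [if_neg (by omega), if_neg (by omega), if_neg (by omega)]
      have h₁ : (((n + 2 : ℕ) : ℤ) + 1).natAbs = n + 3 := by omega
      have h₂ : (((n + 2 : ℕ) : ℤ) - 1).natAbs = n + 1 := by omega
      rw [h₁, h₂, Int.natAbs_natCast]
      push_cast
      linear_combination -(r : ℂ) ^ (n + 1) * hzC / 2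
  rcases Int.natAbs_eq x with hx | hx <;> rw [hx]
  · exact hnat _
  · exact (hnat _).neg (evenBoundState_neg lam r)

theorem isEvenEigenvalue_of_evenJost_eq_zero {μ lam z r : ℝ} (hr : |r| < 1)
    (hz : r ^ 2 + 1 = 2 * (1 - z) * r) (hJ : evenJost μ lam r = 0) :
    IsEvenEigenvalue μ lam z := by
  have hr₀ : r ≠ 0 := by rintro rfl; norm_num at hz
  refine ⟨⟨evenBoundState lam r, memℓp_evenBoundState lam hr⟩, fun h => ?_,
    evenBoundState_neg lam r, eigenEqAt_evenBoundState hr₀ hz hJ⟩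
  have h₁ := congrArg (fun ψ : lp (fun _ : ℤ => ℂ) 2 => ψ 1) h
  simp [evenBoundState, hr₀] at h₁

theorem isEvenEigenvalue_iff_evenJost_eq_zero {μ lam z r : ℝ} (hr : |r| < 1)
    (hz : r ^ 2 + 1 = 2 * (1 - z) * r) :
    IsEvenEigenvalue μ lam z ↔ evenJost μ lam r = 0 :=
  ⟨evenJost_eq_zero_of_isEvenEigenvalue hr hz, isEvenEigenvalue_of_evenJost_eq_zero hr hz⟩

theorem exists_sq_add_one_eq_of_one_lt {t : ℝ} (ht : 1 < t) :
    ∃ r ∈ Set.Ioo (0 : ℝ) 1, r ^ 2 + 1 = 2 * t * r := by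
  have hs := Real.sq_sqrt (show 0 ≤ t ^ 2 - 1 by nlinarith)
  have hlt : √(t ^ 2 - 1) < t := (Real.sqrt_lt' (by linarith)).2 (by linarith)
  have hgt : t - 1 < √(t ^ 2 - 1) := (Real.lt_sqrt (by linarith)).2 (by nlinarith)
  exact ⟨t - √(t ^ 2 - 1), ⟨by linarith, by linarith⟩, by linear_combination hs⟩

theorem exists_sq_add_one_eq_of_lt_neg_one {t : ℝ} (ht : t < -1) :
    ∃ r ∈ Set.Ioo (-1 : ℝ) 0, r ^ 2 + 1 = 2 * t * r := by
  obtain ⟨r, ⟨hr₀, hr₁⟩, hr⟩ := exists_sq_add_one_eq_of_one_lt (t := -t) (by linarith)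
  exact ⟨-r, ⟨by linarith, by linarith⟩, by linear_combination hr⟩

theorem exists_two_lt_sq_add_one_eq {r : ℝ} (hr : r ∈ Set.Ioo (-1 : ℝ) 0) :
    ∃ z, 2 < z ∧ r ^ 2 + 1 = 2 * (1 - z) * r := by
  obtain ⟨hr₁, hr₀⟩ := hr
  refine ⟨1 - (r ^ 2 + 1) / (2 * r), ?_, by field_simp [hr₀.ne]; ring⟩
  have : (r ^ 2 + 1) / (2 * r) < -1 := by
    rw [div_lt_iff_of_neg (by linarith)]
    nlinarith
  linarith

/-- Region `G_{01}`: assume `μ > −1` and `μλ + μ + λ ≥ 0`, and either `μλ − μ − λ < 0`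
or (`μλ − μ − λ = 0` and `μ > 1`). Then `H_{μλ}` has no even eigenvalue in `(−∞, 0)`,
and it has exactly one even eigenvalue outside `[0,2]`, which lies in `(2, +∞)`. -/
theorem region_G01 (μ lam : ℝ) (h1 : -1 < μ) (h2 : 0 ≤ μ * lam + μ + lam)
    (h3 : μ * lam - μ - lam < 0 ∨ (μ * lam - μ - lam = 0 ∧ 1 < μ)) :
    (∀ z : ℝ, z < 0 → ¬ IsEvenEigenvalue μ lam z) ∧
    ∃ ζ : ℝ, 2 < ζ ∧ IsEvenEigenvalue μ lam ζ ∧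
      ∀ z : ℝ, (z < 0 ∨ 2 < z) → IsEvenEigenvalue μ lam z → z = ζ := by
  have hneg : ∀ z : ℝ, z < 0 → ¬ IsEvenEigenvalue μ lam z := by
    intro z hz hev
    obtain ⟨r, hr, hq⟩ := exists_sq_add_one_eq_of_one_lt (t := 1 - z) (by linarith)
    exact (evenJost_pos h1 h2 hr).ne'
      ((isEvenEigenvalue_iff_evenJost_eq_zero
        (abs_lt.2 (Set.Ioo_subset_Ioo_left (by norm_num) hr)) hq).1 hev)
  obtain ⟨r₀, hr₀, hJ₀⟩ := exists_evenJost_eq_zero h3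
  obtain ⟨ζ, hζ, hq₀⟩ := exists_two_lt_sq_add_one_eq hr₀
  have hr₀' : |r₀| < 1 := abs_lt.2 (Set.Ioo_subset_Ioo_right (by norm_num) hr₀)
  refine ⟨hneg, ζ, hζ, (isEvenEigenvalue_iff_evenJost_eq_zero hr₀' hq₀).2 hJ₀, ?_⟩
  rintro z (hz | hz) hev
  · exact absurd hev (hneg z hz)
  obtain ⟨r, hr, hq⟩ := exists_sq_add_one_eq_of_lt_neg_one (t := 1 - z) (by linarith)
  have hw : μ * lam - μ - lam ≤ 0 := h3.elim le_of_lt fun h => h.1.le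
  obtain rfl := evenJost_root_unique hw hr hr₀
    ((isEvenEigenvalue_iff_evenJost_eq_zero
      (abs_lt.2 (Set.Ioo_subset_Ioo_right (by norm_num) hr)) hq).1 hev) hJ₀
  have : (z - ζ) * r = 0 := by linear_combination (hq - hq₀) / 2
  exact sub_eq_zero.1 ((mul_eq_zero.1 this).resolve_right hr.2.ne)
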